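/- Let Q be a query on a λ-graph G. The propagation Q↓ is a bisimulation if and only if the spreading Q⇓ is a bisimulation. -/
import Mathlib


/-- Directions for paths in a λ-graph. -/
inductive Dir : Type where
  | left | body | right
deriving DecidableEq

/-- Labels of nodes of a (pre–)λ-graph. -/
inductive NodeLabel (Node Name : Type) : Type where
  | app (l r : Node)
  | abs (body : Node)
  | fvar (name : Name)
  | bvar (binder : Node)

/-- The four kinds of nodes. -/
inductive NodeKind : Type where
  | app | abs | fvar | bvar
deriving DecidableEq

/-- The kind of a node label. -/
def NodeLabel.kind {Node Name : Type} : NodeLabel Node Name → NodeKind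
  | .app _ _ => .app
  | .abs _ => .abs
  | .fvar _ => .fvar
  | .bvar _ => .bvar

/-- Locally nameless λ-terms. -/
inductive Term (Name : Type) : Type where
  | bvar (i : ℕ)
  | fvar (a : Name)
  | app (t s : Term Name)
  | lam (t : Term Name)

/-- Reflexive–symmetric–transitive closure `R*` of a relation. -/
inductive RstClosure {α : Type _} (R : α → α → Prop) : α → α → Prop where
  | base {a b : α} : R a b → RstClosure R a b
  | refl (a : α) : RstClosure R a a
  | symm {a b : α} : RstClosure R a b → RstClosure R b a
  | trans {a b c : α} : RstClosure R a b → RstClosure R b c → RstClosure R a c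

/-- A pre–λ-graph: every node carries a label; the binder of a bound variable node is an
abstraction node; the name of a free variable node uniquely identifies it. -/
structure PreLamGraph (Node Name : Type) : Type where
  label : Node → NodeLabel Node Name
  binder_abs : ∀ n l, label n = .bvar l → ∃ b, label l = .abs b
  fvar_inj : ∀ n m a, label n = .fvar a → label m = .fvar a → n = m

namespace PreLamGraph

variable {Node Name : Type}

/-- `Path G τ n m`: there is a path from `n` to `m` with trace `τ`
(binding edges are never followed). -/
inductive Path (G : PreLamGraph Node Name) : List Dir → Node → Node → Prop where
  | nil (n : Node) : Path G [] n n
  | abs {τ : List Dir} {n m b : Node} :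
      Path G τ n m → G.label m = .abs b → Path G (.body :: τ) n b
  | appL {τ : List Dir} {n m l r : Node} :
      Path G τ n m → G.label m = .app l r → Path G (.left :: τ) n l
  | appR {τ : List Dir} {n m l r : Node} :
      Path G τ n m → G.label m = .app l r → Path G (.right :: τ) n r

/-- `r` is a root: the only path ending at `r` is the empty path from `r` itself. -/
def Root (G : PreLamGraph Node Name) (r : Node) : Prop :=
  ∀ (τ : List Dir) (n : Node), G.Path τ n r → τ = []

/-- `Crosses G τ n p`: the path from `n` with trace `τ` crosses the node `p`. -/
inductive Crosses (G : PreLamGraph Node Name) : List Dir → Node → Node → Prop where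
  | here {τ : List Dir} {n p : Node} : G.Path τ n p → Crosses G τ n p
  | step {d : Dir} {τ : List Dir} {n p m : Node} :
      Crosses G τ n p → G.Path (d :: τ) n m → Crosses G (d :: τ) n p

/-- `m` dominates `n`: every path from a root to `n` crosses `m`. -/
def Dominates (G : PreLamGraph Node Name) (m n : Node) : Prop :=
  ∀ (r : Node) (τ : List Dir), G.Root r → G.Path τ r n → G.Crosses τ r m

/-- Acyclicity: a path from a node to itself must have empty trace. -/
def Acyclic (G : PreLamGraph Node Name) : Prop :=
  ∀ (n : Node) (τ : List Dir), G.Path τ n n → τ = []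

/-- Every bound variable node is dominated by its binder. -/
def Dominated (G : PreLamGraph Node Name) : Prop :=
  ∀ (n l : Node), G.label n = .bvar l → G.Dominates l n

/-- A query relates only root nodes. -/
def IsQuery (G : PreLamGraph Node Name) (Q : Node → Node → Prop) : Prop :=
  ∀ n m, Q n m → G.Root n ∧ G.Root m

/-- A relation is homogeneous if it only relates nodes of the same kind. -/
def Homogeneous (G : PreLamGraph Node Name) (R : Node → Node → Prop) : Prop :=
  ∀ n m, R n m → (G.label n).kind = (G.label m).kind

/-- Closure under the left propagation rule. -/
def ClosedAppL (G : PreLamGraph Node Name) (R : Node → Node → Prop) : Prop :=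
  ∀ n m n1 n2 m1 m2, G.label n = .app n1 n2 → G.label m = .app m1 m2 → R n m → R n1 m1

/-- Closure under the right propagation rule. -/
def ClosedAppR (G : PreLamGraph Node Name) (R : Node → Node → Prop) : Prop :=
  ∀ n m n1 n2 m1 m2, G.label n = .app n1 n2 → G.label m = .app m1 m2 → R n m → R n2 m2

/-- Closure under the body propagation rule. -/
def ClosedAbs (G : PreLamGraph Node Name) (R : Node → Node → Prop) : Prop :=
  ∀ n m n' m', G.label n = .abs n' → G.label m = .abs m' → R n m → R n' m'

/-- Closure under the scoping rule. -/
def ClosedScope (G : PreLamGraph Node Name) (R : Node → Node → Prop) : Prop :=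
  ∀ n m l l', G.label n = .bvar l → G.label m = .bvar l' → R n m → R l l'

/-- Closure under the three propagation rules. -/
def ClosedProp (G : PreLamGraph Node Name) (R : Node → Node → Prop) : Prop :=
  G.ClosedAppL R ∧ G.ClosedAppR R ∧ G.ClosedAbs R

/-- A blind bisimulation is a homogeneous relation closed under the propagation rules. -/
def BlindBisimulation (G : PreLamGraph Node Name) (R : Node → Node → Prop) : Prop :=
  G.Homogeneous R ∧ G.ClosedProp R

/-- A bisimulation is a homogeneous relation closed under the propagation rules
and the scoping rule. -/
def Bisimulation (G : PreLamGraph Node Name) (R : Node → Node → Prop) : Prop :=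
  G.BlindBisimulation R ∧ G.ClosedScope R

/-- A relation is open if whenever it relates two free variable nodes they are equal. -/
def OpenRel (G : PreLamGraph Node Name) (R : Node → Node → Prop) : Prop :=
  ∀ n m a b, G.label n = .fvar a → G.label m = .fvar b → R n m → n = m

/-- A sharing equivalence is an open bisimulation that is also an equivalence relation. -/
def SharingEquivalence (G : PreLamGraph Node Name) (R : Node → Node → Prop) : Prop :=
  G.OpenRel R ∧ G.Bisimulation R ∧ Equivalence R

/-- A blind sharing equivalence is an equivalence relation that is a blind bisimulation. -/
def BlindSharingEquivalence (G : PreLamGraph Node Name) (R : Node → Node → Prop) : Prop :=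
  Equivalence R ∧ G.BlindBisimulation R

/-- The propagation `R↓`: the smallest relation containing `R` and closed under the
propagation rules. -/
inductive Propagation (G : PreLamGraph Node Name) (R : Node → Node → Prop) :
    Node → Node → Prop where
  | base {n m : Node} : R n m → Propagation G R n m
  | appL {n m n1 n2 m1 m2 : Node} :
      Propagation G R n m → G.label n = .app n1 n2 → G.label m = .app m1 m2 →
      Propagation G R n1 m1
  | appR {n m n1 n2 m1 m2 : Node} :
      Propagation G R n m → G.label n = .app n1 n2 → G.label m = .app m1 m2 →
      Propagation G R n2 m2
  | abs {n m n' m' : Node} :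
      Propagation G R n m → G.label n = .abs n' → G.label m = .abs m' →
      Propagation G R n' m'

/-- The spreading `R⇓`: the smallest equivalence relation containing `R` and closed
under the propagation rules. -/
inductive Spreading (G : PreLamGraph Node Name) (R : Node → Node → Prop) :
    Node → Node → Prop where
  | base {n m : Node} : R n m → Spreading G R n m
  | refl (n : Node) : Spreading G R n n
  | symm {n m : Node} : Spreading G R n m → Spreading G R m n
  | trans {n m p : Node} : Spreading G R n m → Spreading G R m p → Spreading G R n p
  | appL {n m n1 n2 m1 m2 : Node} :
      Spreading G R n m → G.label n = .app n1 n2 → G.label m = .app m1 m2 →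
      Spreading G R n1 m1
  | appR {n m n1 n2 m1 m2 : Node} :
      Spreading G R n m → G.label n = .app n1 n2 → G.label m = .app m1 m2 →
      Spreading G R n2 m2
  | abs {n m n' m' : Node} :
      Spreading G R n m → G.label n = .abs n' → G.label m = .abs m' →
      Spreading G R n' m'

/-- `IndexOf G l n τ k`: the de Bruijn index of the abstraction node `l` along the path
from `n` with trace `τ` (which crosses `l`) is `k`. -/
inductive IndexOf (G : PreLamGraph Node Name) (l n : Node) : List Dir → ℕ → Prop where
  | here {τ : List Dir} : G.Path τ n l → IndexOf G l n τ 0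
  | abs {d : Dir} {τ : List Dir} {m b : Node} {k : ℕ} :
      G.Path (d :: τ) n m → G.label m = .abs b → m ≠ l →
      IndexOf G l n τ k → IndexOf G l n (d :: τ) (k + 1)
  | other {d : Dir} {τ : List Dir} {m : Node} {k : ℕ} :
      G.Path (d :: τ) n m → (∀ b, G.label m ≠ .abs b) →
      IndexOf G l n τ k → IndexOf G l n (d :: τ) k

/-- `Readback G r τ t`: the readback of the endpoint of the access path from `r` with
trace `τ` is the locally nameless term `t`. -/
inductive Readback (G : PreLamGraph Node Name) (r : Node) : List Dir → Term Name → Prop where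
  | bvar {τ : List Dir} {n l : Node} {k : ℕ} :
      G.Path τ r n → G.label n = .bvar l → G.IndexOf l r τ k →
      Readback G r τ (.bvar k)
  | fvar {τ : List Dir} {n : Node} {a : Name} :
      G.Path τ r n → G.label n = .fvar a → Readback G r τ (.fvar a)
  | abs {τ : List Dir} {n b : Node} {t : Term Name} :
      G.Path τ r n → G.label n = .abs b → Readback G r (.body :: τ) t →
      Readback G r τ (.lam t)
  | app {τ : List Dir} {n n1 n2 : Node} {t1 t2 : Term Name} :
      G.Path τ r n → G.label n = .app n1 n2 →
      Readback G r (.left :: τ) t1 → Readback G r (.right :: τ) t2 →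
      Readback G r τ (.app t1 t2)

end PreLamGraph

/-- A λ-graph: a finite, acyclic and dominated pre–λ-graph. -/
structure LamGraph (Node Name : Type) extends PreLamGraph Node Name where
  finite : Finite Node
  acyclic : toPreLamGraph.Acyclic
  dominated : toPreLamGraph.Dominated
section Aux

namespace PreLamGraph

variable {Node Name : Type} {G : PreLamGraph Node Name}

theorem kind_app' {n : Node} (h : (G.label n).kind = .app) :
    ∃ a b, G.label n = .app a b := by
  cases hl : G.label n
  case app => exact ⟨_, _, rfl⟩
  all_goals (rw [hl] at h; simp [NodeLabel.kind] at h)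

theorem kind_abs' {n : Node} (h : (G.label n).kind = .abs) :
    ∃ b, G.label n = .abs b := by
  cases hl : G.label n
  case abs => exact ⟨_, rfl⟩
  all_goals (rw [hl] at h; simp [NodeLabel.kind] at h)

theorem kind_bvar' {n : Node} (h : (G.label n).kind = .bvar) :
    ∃ l, G.label n = .bvar l := by
  cases hl : G.label n
  case bvar => exact ⟨_, rfl⟩
  all_goals (rw [hl] at h; simp [NodeLabel.kind] at h)

theorem path_det {τ : List Dir} {n m m' : Node}
    (h : G.Path τ n m) (h' : G.Path τ n m') : m = m' := by
  induction h generalizing m' with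
  | nil => cases h'; rfl
  | abs hp hl ih =>
      cases h' with
      | abs hp' hl' => cases ih hp'; rw [hl] at hl'; cases hl'; rfl
  | appL hp hl ih =>
      cases h' with
      | appL hp' hl' => cases ih hp'; rw [hl] at hl'; cases hl'; rfl
  | appR hp hl ih =>
      cases h' with
      | appR hp' hl' => cases ih hp'; rw [hl] at hl'; cases hl'; rfl

theorem path_comp {σ δ : List Dir} {n p m : Node}
    (h1 : G.Path σ n p) (h2 : G.Path δ p m) : G.Path (δ ++ σ) n m := by
  induction h2 with
  | nil => exact h1
  | abs hp hl ih => exact .abs (ih h1) hl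
  | appL hp hl ih => exact .appL (ih h1) hl
  | appR hp hl ih => exact .appR (ih h1) hl

theorem path_split {δ σ : List Dir} {n m : Node}
    (h : G.Path (δ ++ σ) n m) : ∃ p, G.Path σ n p ∧ G.Path δ p m := by
  induction δ generalizing m with
  | nil => exact ⟨m, h, .nil m⟩
  | cons d δ ih =>
      cases h with
      | abs hp hl => obtain ⟨p, h1, h2⟩ := ih hp; exact ⟨p, h1, .abs h2 hl⟩
      | appL hp hl => obtain ⟨p, h1, h2⟩ := ih hp; exact ⟨p, h1, .appL h2 hl⟩
      | appR hp hl => obtain ⟨p, h1, h2⟩ := ih hp; exact ⟨p, h1, .appR h2 hl⟩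

theorem crosses_suffix {τ : List Dir} {n p : Node}
    (h : G.Crosses τ n p) : ∃ σ, σ <:+ τ ∧ G.Path σ n p := by
  induction h with
  | here hp => exact ⟨_, List.suffix_rfl, hp⟩
  | step _ hp ih =>
      obtain ⟨σ, hs, hpath⟩ := ih
      exact ⟨σ, hs.trans (List.suffix_cons _ _), hpath⟩

/-- Lift a path along a homogeneous, propagation-closed relation. -/
theorem lift_path {S : Node → Node → Prop} (hH : G.Homogeneous S)
    (hL : G.ClosedAppL S) (hR : G.ClosedAppR S) (hA : G.ClosedAbs S)
    {δ : List Dir} {x x' y : Node} (hxy : S x y) (hp : G.Path δ x x') :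
    ∃ y', G.Path δ y y' ∧ S x' y' := by
  induction hp with
  | nil => exact ⟨y, .nil y, hxy⟩
  | abs hp hl ih =>
      obtain ⟨y1, hpy, hS⟩ := ih hxy
      obtain ⟨b', hl'⟩ := kind_abs' (by rw [← hH _ _ hS, hl]; rfl)
      exact ⟨b', .abs hpy hl', hA _ _ _ _ hl hl' hS⟩
  | appL hp hl ih =>
      obtain ⟨y1, hpy, hS⟩ := ih hxy
      obtain ⟨a', b', hl'⟩ := kind_app' (by rw [← hH _ _ hS, hl]; rfl)
      exact ⟨a', .appL hpy hl', hL _ _ _ _ _ _ hl hl' hS⟩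
  | appR hp hl ih =>
      obtain ⟨y1, hpy, hS⟩ := ih hxy
      obtain ⟨a', b', hl'⟩ := kind_app' (by rw [← hH _ _ hS, hl]; rfl)
      exact ⟨b', .appR hpy hl', hR _ _ _ _ _ _ hl hl' hS⟩

def iterTrace (δ : List Dir) : ℕ → List Dir
  | 0 => []
  | k + 1 => δ ++ iterTrace δ k

theorem iterTrace_add (δ : List Dir) (a b : ℕ) :
    iterTrace δ (a + b) = iterTrace δ a ++ iterTrace δ b := by
  induction a with
  | zero => simp [iterTrace]
  | succ a ih =>
      have h : a + 1 + b = (a + b) + 1 := by omega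
      rw [h, iterTrace, iterTrace, ih, List.append_assoc]

theorem no_loop [Finite Node] (hacy : G.Acyclic) {S : Node → Node → Prop}
    (hH : G.Homogeneous S) (hL : G.ClosedAppL S) (hR : G.ClosedAppR S)
    (hA : G.ClosedAbs S) {δ : List Dir} {x y : Node}
    (hxy : S x y) (hp : G.Path δ x y) (hδ : δ ≠ []) : False := by
  have key : ∀ k : ℕ, ∃ z z', G.Path (iterTrace δ k) x z ∧ G.Path δ z z' ∧ S z z' := by
    intro k
    induction k with
    | zero => exact ⟨x, y, .nil x, hp, hxy⟩
    | succ k ih =>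
        obtain ⟨z, z', h1, h2, h3⟩ := ih
        obtain ⟨z'', h4, h5⟩ := lift_path hH hL hR hA h3 h2
        exact ⟨z', z'', by rw [iterTrace]; exact path_comp h1 h2, h4, h5⟩
  choose f f' hf hf2 hf3 using key
  have main : ∀ i j : ℕ, i < j → f i = f j → False := by
    intro i j hlt hfij
    have h2 := hf j
    rw [show iterTrace δ j = iterTrace δ (j - i) ++ iterTrace δ i from by
      rw [← iterTrace_add]; congr 1; omega] at h2
    obtain ⟨p, hp1, hp2⟩ := path_split h2
    have hpi : p = f i := path_det hp1 (hf i)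
    subst hpi
    rw [hfij] at hp2
    have hemp := hacy _ _ hp2
    have hne : j - i ≠ 0 := by omega
    rcases Nat.exists_eq_succ_of_ne_zero hne with ⟨k, hk⟩
    rw [hk] at hemp
    simp [iterTrace, List.append_eq_nil_iff] at hemp
    exact hδ hemp.1
  obtain ⟨i, j, hij, hfij⟩ := Finite.exists_ne_map_eq_of_infinite f
  rcases lt_or_gt_of_ne hij with hlt | hlt
  · exact main i j hlt hfij
  · exact main j i hlt hfij.symm

theorem prop_trace {Q : Node → Node → Prop} {n m : Node}
    (h : Propagation G Q n m) :
    ∃ r r' τ, Q r r' ∧ G.Path τ r n ∧ G.Path τ r' m := by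
  induction h with
  | base h => exact ⟨_, _, [], h, .nil _, .nil _⟩
  | appL _ hl hl' ih =>
      obtain ⟨r, r', τ, hq, h1, h2⟩ := ih
      exact ⟨r, r', _, hq, .appL h1 hl, .appL h2 hl'⟩
  | appR _ hl hl' ih =>
      obtain ⟨r, r', τ, hq, h1, h2⟩ := ih
      exact ⟨r, r', _, hq, .appR h1 hl, .appR h2 hl'⟩
  | abs _ hl hl' ih =>
      obtain ⟨r, r', τ, hq, h1, h2⟩ := ih
      exact ⟨r, r', _, hq, .abs h1 hl, .abs h2 hl'⟩

theorem path_prop {Q : Node → Node → Prop} {r r' : Node} (hq : Q r r')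
    {σ : List Dir} {x y : Node} (hx : G.Path σ r x) (hy : G.Path σ r' y) :
    Propagation G Q x y := by
  induction hx generalizing y with
  | nil => cases hy; exact .base hq
  | abs hp hl ih =>
      cases hy with
      | abs hp' hl' => exact .abs (ih hq hp') hl hl'
  | appL hp hl ih =>
      cases hy with
      | appL hp' hl' => exact .appL (ih hq hp') hl hl'
  | appR hp hl ih =>
      cases hy with
      | appR hp' hl' => exact .appR (ih hq hp') hl hl'

theorem prop_sub_spread {Q : Node → Node → Prop} {n m : Node}
    (h : Propagation G Q n m) : Spreading G Q n m := by
  induction h with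
  | base h => exact .base h
  | appL _ hl hl' ih => exact .appL ih hl hl'
  | appR _ hl hl' ih => exact .appR ih hl hl'
  | abs _ hl hl' ih => exact .abs ih hl hl'

end PreLamGraph

end Aux
section Aux2

namespace PreLamGraph

variable {Node Name : Type} {G : PreLamGraph Node Name} {Q : Node → Node → Prop}

theorem rst_homog (hH : G.Homogeneous (Propagation G Q)) :
    G.Homogeneous (RstClosure (Propagation G Q)) := by
  intro n m h
  induction h with
  | base h => exact hH _ _ h
  | refl a => rfl
  | symm _ ih => exact ih.symm
  | trans _ _ ih1 ih2 => exact ih1.trans ih2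

theorem rst_appL (hH : G.Homogeneous (Propagation G Q))
    (hL : G.ClosedAppL (Propagation G Q)) :
    G.ClosedAppL (RstClosure (Propagation G Q)) := by
  intro n m n1 n2 m1 m2 hln hlm h
  induction h generalizing n1 n2 m1 m2 with
  | base h => exact .base (hL _ _ _ _ _ _ hln hlm h)
  | refl a => rw [hln] at hlm; cases hlm; exact .refl _
  | symm _ ih => exact .symm (ih _ _ _ _ hlm hln)
  | trans h1 _ ih1 ih2 =>
      obtain ⟨b1, b2, hlb⟩ := kind_app' (G := G)
        (by rw [← rst_homog hH _ _ h1, hln]; rfl)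
      exact .trans (ih1 _ _ _ _ hln hlb) (ih2 _ _ _ _ hlb hlm)

theorem rst_appR (hH : G.Homogeneous (Propagation G Q))
    (hR : G.ClosedAppR (Propagation G Q)) :
    G.ClosedAppR (RstClosure (Propagation G Q)) := by
  intro n m n1 n2 m1 m2 hln hlm h
  induction h generalizing n1 n2 m1 m2 with
  | base h => exact .base (hR _ _ _ _ _ _ hln hlm h)
  | refl a => rw [hln] at hlm; cases hlm; exact .refl _
  | symm _ ih => exact .symm (ih _ _ _ _ hlm hln)
  | trans h1 _ ih1 ih2 =>
      obtain ⟨b1, b2, hlb⟩ := kind_app' (G := G)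
        (by rw [← rst_homog hH _ _ h1, hln]; rfl)
      exact .trans (ih1 _ _ _ _ hln hlb) (ih2 _ _ _ _ hlb hlm)

theorem rst_abs (hH : G.Homogeneous (Propagation G Q))
    (hA : G.ClosedAbs (Propagation G Q)) :
    G.ClosedAbs (RstClosure (Propagation G Q)) := by
  intro n m n' m' hln hlm h
  induction h generalizing n' m' with
  | base h => exact .base (hA _ _ _ _ hln hlm h)
  | refl a => rw [hln] at hlm; cases hlm; exact .refl _
  | symm _ ih => exact .symm (ih _ _ hlm hln)
  | trans h1 _ ih1 ih2 =>
      obtain ⟨b, hlb⟩ := kind_abs' (G := G)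
        (by rw [← rst_homog hH _ _ h1, hln]; rfl)
      exact .trans (ih1 _ _ hln hlb) (ih2 _ _ hlb hlm)

theorem rst_scope (hH : G.Homogeneous (Propagation G Q))
    (hS : G.ClosedScope (Propagation G Q)) :
    G.ClosedScope (RstClosure (Propagation G Q)) := by
  intro n m l l' hln hlm h
  induction h generalizing l l' with
  | base h => exact .base (hS _ _ _ _ hln hlm h)
  | refl a => rw [hln] at hlm; cases hlm; exact .refl _
  | symm _ ih => exact .symm (ih _ _ hlm hln)
  | trans h1 _ ih1 ih2 =>
      obtain ⟨b, hlb⟩ := kind_bvar' (G := G)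
        (by rw [← rst_homog hH _ _ h1, hln]; rfl)
      exact .trans (ih1 _ _ hln hlb) (ih2 _ _ hlb hlm)

theorem spread_to_rst (hH : G.Homogeneous (Propagation G Q))
    (hL : G.ClosedAppL (Propagation G Q)) (hR : G.ClosedAppR (Propagation G Q))
    (hA : G.ClosedAbs (Propagation G Q)) {n m : Node} (h : Spreading G Q n m) :
    RstClosure (Propagation G Q) n m := by
  induction h with
  | base h => exact .base (.base h)
  | refl n => exact .refl n
  | symm _ ih => exact .symm ih
  | trans _ _ ih1 ih2 => exact .trans ih1 ih2
  | appL _ hl hl' ih => exact rst_appL hH hL _ _ _ _ _ _ hl hl' ih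
  | appR _ hl hl' ih => exact rst_appR hH hR _ _ _ _ _ _ hl hl' ih
  | abs _ hl hl' ih => exact rst_abs hH hA _ _ _ _ hl hl' ih

theorem rst_to_spread {n m : Node} (h : RstClosure (Propagation G Q) n m) :
    Spreading G Q n m := by
  induction h with
  | base h => exact prop_sub_spread h
  | refl n => exact .refl n
  | symm _ ih => exact .symm ih
  | trans _ _ ih1 ih2 => exact .trans ih1 ih2

end PreLamGraph

end Aux2
open PreLamGraph in
/-- `Q↓` is a bisimulation iff `Q⇓` is a bisimulation. -/
theorem propagation_bisim_iff_spreading_bisim {Node Name : Type} (G : LamGraph Node Name)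
    (Q : Node → Node → Prop) (hQ : G.toPreLamGraph.IsQuery Q) :
    G.toPreLamGraph.Bisimulation (Propagation G.toPreLamGraph Q) ↔
      G.toPreLamGraph.Bisimulation (Spreading G.toPreLamGraph Q) := by
  haveI : Finite Node := G.finite
  constructor
  · rintro ⟨⟨hH, hL, hR, hA⟩, hS⟩
    refine ⟨⟨?_, ?_, ?_, ?_⟩, ?_⟩
    · intro n m h
      exact rst_homog hH _ _ (spread_to_rst hH hL hR hA h)
    · intro n m n1 n2 m1 m2 hln hlm h
      exact .appL h hln hlm
    · intro n m n1 n2 m1 m2 hln hlm h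
      exact .appR h hln hlm
    · intro n m n' m' hln hlm h
      exact .abs h hln hlm
    · intro n m l l' hln hlm h
      exact rst_to_spread
        (rst_scope hH hS _ _ _ _ hln hlm (spread_to_rst hH hL hR hA h))
  · rintro ⟨⟨hH, hL, hR, hA⟩, hS⟩
    refine ⟨⟨?_, ?_, ?_, ?_⟩, ?_⟩
    · intro n m h
      exact hH _ _ (prop_sub_spread h)
    · intro n m n1 n2 m1 m2 hln hlm h
      exact .appL h hln hlm
    · intro n m n1 n2 m1 m2 hln hlm h
      exact .appR h hln hlm
    · intro n m n' m' hln hlm h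
      exact .abs h hln hlm
    · -- scoping for the propagation
      intro n m l l' hln hlm h
      obtain ⟨r, r', τ, hq, hpn, hpm⟩ := prop_trace h
      obtain ⟨hrootr, hrootr'⟩ := hQ r r' hq
      obtain ⟨σ, hsτ, hpl⟩ := crosses_suffix (G.dominated n l hln r τ hrootr hpn)
      obtain ⟨σ', hsτ', hpl'⟩ := crosses_suffix (G.dominated m l' hlm r' τ hrootr' hpm)
      have hll' : Spreading G.toPreLamGraph Q l l' :=
        hS n m l l' hln hlm (prop_sub_spread h)
      rcases List.suffix_or_suffix_of_suffix hsτ hsτ' with hss | hss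
      · obtain ⟨δ, rfl⟩ := hss
        obtain ⟨q, hq1, hq2⟩ := path_split hpl'
        have hplq : Propagation G.toPreLamGraph Q l q := path_prop hq hpl hq1
        rcases δ with _ | ⟨d, δ⟩
        · cases hq2; exact hplq
        · have hsql : Spreading G.toPreLamGraph Q q l' :=
            .trans (.symm (prop_sub_spread hplq)) hll'
          exact (no_loop G.acyclic hH hL hR hA hsql hq2 (List.cons_ne_nil d δ)).elim
      · obtain ⟨δ, rfl⟩ := hss
        obtain ⟨p, hp1, hp2⟩ := path_split hpl
        have hppl' : Propagation G.toPreLamGraph Q p l' := path_prop hq hp1 hpl'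
        rcases δ with _ | ⟨d, δ⟩
        · cases hp2; exact hppl'
        · have hspl : Spreading G.toPreLamGraph Q p l :=
            .trans (prop_sub_spread hppl') (.symm hll')
          exact (no_loop G.acyclic hH hL hR hA hspl hp2 (List.cons_ne_nil d δ)).elim
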